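/- arXiv:2512.09083 — 3 statements merged into one kernel-verified Lean document; each statement's English description precedes it below -/
import Mathlib

section
/- Let 0 < μ < 1, R > 0, r > 0. If d < (1−μ)R + r, then the condition |d² + μ²R² − (R+r)²| ≤ 2μRd fails; hence no aspect angle ξ satisfies ρ(ξ) = d (the agent is in the no-escape region). -/
/-!
The arccos argument lies in `[-1, 1]` exactly when a triangle with sides `d`, `μR`, `R + r`
exists (law of cosines), and `d + μR < R + r` violates the triangle inequality. For the second
claim, `ρ(ξ) = μR (cos ξ + √(cos² ξ - 1 + K²))` with `K = (R + r) / (μR) > 1` is at least its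
value at `cos ξ = -1`, namely `R + r - μR > d`.
-/

open Real

theorem not_abs_sq_add_sq_sub_sq_le {d m s : ℝ} (hm : 0 < m) (hlt : d + m < s) :
    ¬ |d ^ 2 + m ^ 2 - s ^ 2| ≤ 2 * m * d := by
  intro h
  have hd : 0 ≤ d := by nlinarith [abs_nonneg (d ^ 2 + m ^ 2 - s ^ 2)]
  have hsq : (d + m) ^ 2 < s ^ 2 := by gcongr
  linarith [neg_abs_le (d ^ 2 + m ^ 2 - s ^ 2)]

theorem sub_one_le_add_sqrt {K c : ℝ} (hK : 1 ≤ K) (hc : -1 ≤ c) :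
    K - 1 ≤ c + √(c ^ 2 - 1 + K ^ 2) := by
  have hsq : (K - 1 - c) ^ 2 ≤ c ^ 2 - 1 + K ^ 2 := by
    nlinarith [mul_nonneg (sub_nonneg.2 hK) (neg_le_iff_add_nonneg.1 hc)]
  have := (le_abs_self (K - 1 - c)).trans ((sqrt_sq_eq_abs _).symm.le.trans (sqrt_le_sqrt hsq))
  linarith

/-- Distance from the threat at which aspect angle `ξ` puts the agent on the boundary of the
engagement zone. -/
noncomputable def boundaryDist (μ R r ξ : ℝ) : ℝ :=
  μ * R * (cos ξ + √(cos ξ ^ 2 - 1 + (R + r) ^ 2 / (μ ^ 2 * R ^ 2)))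

theorem one_sub_mul_add_le_boundaryDist {μ R r : ℝ} (hμ0 : 0 < μ) (hμ1 : μ < 1) (hR : 0 < R)
    (hr : 0 < r) (ξ : ℝ) : (1 - μ) * R + r ≤ boundaryDist μ R r ξ := by
  have hμR : 0 < μ * R := mul_pos hμ0 hR
  set K := (R + r) / (μ * R)
  have hKμR : K * (μ * R) = R + r := div_mul_cancel₀ _ hμR.ne'
  have hK : 1 ≤ K := by rw [le_div_iff₀ hμR]; nlinarith
  have hKsq : (R + r) ^ 2 / (μ ^ 2 * R ^ 2) = K ^ 2 := by rw [div_pow, mul_pow]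
  calc (1 - μ) * R + r = μ * R * (K - 1) := by linarith
    _ ≤ boundaryDist μ R r ξ := by
      rw [boundaryDist, hKsq]
      exact mul_le_mul_of_nonneg_left (sub_one_le_add_sqrt hK (neg_one_le_cos ξ)) hμR.le

theorem no_escape_region_general (μ R r d : ℝ)
    (hμ0 : 0 < μ) (hμ1 : μ < 1) (hR : 0 < R) (hr : 0 < r)
    (hne : d < (1 - μ) * R + r) :
    ¬ (|d ^ 2 + μ ^ 2 * R ^ 2 - (R + r) ^ 2| ≤ 2 * μ * R * d) ∧
    ∀ ξ : ℝ, μ * R * (Real.cos ξ +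
      Real.sqrt (Real.cos ξ ^ 2 - 1 + (R + r) ^ 2 / (μ ^ 2 * R ^ 2))) ≠ d := by
  have hlt : d + μ * R < R + r := by linarith
  refine ⟨?_, fun ξ => (hne.trans_le (one_sub_mul_add_le_boundaryDist hμ0 hμ1 hR hr ξ)).ne'⟩
  simpa only [mul_pow, mul_assoc] using not_abs_sq_add_sq_sub_sq_le (mul_pos hμ0 hR) hlt

/-- In the no-escape region d < (1−μ)R + r, the arccos-argument condition
fails and no aspect angle puts the agent on the BEZ boundary. -/
theorem no_escape_region (μ R r d : ℝ)
    (hμ0 : 0 < μ) (hμ1 : μ < 1) (hR : 0 < R) (hr : 0 < r) (hd : 0 ≤ d)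
    (hne : d < (1 - μ) * R + r) :
    ¬ (|d ^ 2 + μ ^ 2 * R ^ 2 - (R + r) ^ 2| ≤ 2 * μ * R * d) ∧
    ∀ ξ : ℝ, μ * R * (Real.cos ξ +
      Real.sqrt (Real.cos ξ ^ 2 - 1 + (R + r) ^ 2 / (μ ^ 2 * R ^ 2))) ≠ d :=
  no_escape_region_general μ R r d hμ0 hμ1 hR hr hne
end

section
/- For 0 < μ < 1, R > 0, r > 0, and d > sqrt((R+r)² + μ²R²) with the arccos argument in [−1,1], we have arccos((d² + μ²R² − (R+r)²)/(2μRd)) < arcsin((R+r)/d); i.e., above the critical distance the tangency condition is the more restrictive (larger) aspect angle. -/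
/-!
Write `s = R + r`, `m = μ R` and `t = √(d² - s²)`, the length of the tangent from distance `d`.
Then `arcsin (s / d) = arccos (t / d)` and the arccos argument of the boundary angle is
`(t² + m²) / (2 m d)`, which exceeds `t / d` because `t² + m² > 2 m t` as soon as `t ≠ m`.
Being above the critical distance says exactly `t > m`, and `arccos` is strictly decreasing.
-/

open Real

namespace Real

lemma arccos_lt_arccos_of_lt_one {x y : ℝ} (hx : -1 ≤ x) (hxy : x < y) (hx1 : x < 1) :
    arccos y < arccos x := by
  rcases le_or_gt y 1 with hy | hy
  · exact arccos_lt_arccos hx hxy hy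
  · rw [arccos_eq_zero.2 hy.le]
    exact arccos_pos.2 hx1

lemma sqrt_one_sub_div_sq {s d : ℝ} (hd : 0 < d) : √(1 - (s / d) ^ 2) = √(d ^ 2 - s ^ 2) / d := by
  rw [show 1 - (s / d) ^ 2 = (d ^ 2 - s ^ 2) / d ^ 2 by field_simp, sqrt_div' _ (sq_nonneg d),
    sqrt_sq hd.le]

lemma arcsin_div_eq_arccos_sqrt_sub_sq {s d : ℝ} (hs : 0 ≤ s) (hd : 0 < d) :
    arcsin (s / d) = arccos (√(d ^ 2 - s ^ 2) / d) := by
  rw [arcsin_eq_arccos (by positivity), sqrt_one_sub_div_sq hd]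

end Real

lemma div_lt_sq_add_sq_div {t m d : ℝ} (hm : 0 < m) (hd : 0 < d) (hmt : m ≠ t) :
    t / d < (t ^ 2 + m ^ 2) / (2 * m * d) := by
  rw [div_lt_div_iff₀ hd (by positivity)]
  nlinarith [sq_pos_of_ne_zero (sub_ne_zero.2 hmt), hd]

theorem boundary_lt_tangent_above_crit_general (μ R r d : ℝ)
    (hμ0 : 0 < μ) (hR : 0 < R) (hr : 0 < r)
    (hd2 : d > Real.sqrt ((R + r) ^ 2 + μ ^ 2 * R ^ 2)) :
    Real.arccos ((d ^ 2 + μ ^ 2 * R ^ 2 - (R + r) ^ 2) / (2 * μ * R * d)) <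
      Real.arcsin ((R + r) / d) := by
  have hd : 0 < d := (sqrt_nonneg _).trans_lt hd2
  have hs : 0 < R + r := by positivity
  have hm : 0 < μ * R := by positivity
  set t := √(d ^ 2 - (R + r) ^ 2) with ht
  have hcrit : (R + r) ^ 2 + (μ * R) ^ 2 < d ^ 2 := by
    rw [← sqrt_lt' hd, mul_pow]; exact hd2
  have hmt : μ * R < t := (lt_sqrt hm.le).2 (by linarith)
  have hboundary : (d ^ 2 + μ ^ 2 * R ^ 2 - (R + r) ^ 2) / (2 * μ * R * d) =
      (t ^ 2 + (μ * R) ^ 2) / (2 * (μ * R) * d) := by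
    rw [ht, sq_sqrt (by nlinarith)]; ring
  rw [arcsin_div_eq_arccos_sqrt_sub_sq hs.le hd, hboundary]
  refine arccos_lt_arccos_of_lt_one ?_ (div_lt_sq_add_sq_div hm hd hmt.ne) ?_
  · exact neg_one_lt_zero.le.trans (by positivity)
  · rw [div_lt_one hd, sqrt_lt' hd]
    exact sub_lt_self _ (by positivity)

/-- Above the critical distance, the tangency aspect angle exceeds the
boundary aspect angle. -/
theorem boundary_lt_tangent_above_crit (μ R r d : ℝ)
    (hμ0 : 0 < μ) (hμ1 : μ < 1) (hR : 0 < R) (hr : 0 < r)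
    (hd1 : R + r ≤ d) (hd2 : d > Real.sqrt ((R + r) ^ 2 + μ ^ 2 * R ^ 2))
    (harg : |(d ^ 2 + μ ^ 2 * R ^ 2 - (R + r) ^ 2) / (2 * μ * R * d)| ≤ 1) :
    Real.arccos ((d ^ 2 + μ ^ 2 * R ^ 2 - (R + r) ^ 2) / (2 * μ * R * d)) <
      Real.arcsin ((R + r) / d) :=
  boundary_lt_tangent_above_crit_general μ R r d hμ0 hR hr hd2
end

section
/- Let 0 < μ < 1, R > 0, r > 0 and suppose d satisfies |d² + μ²R² − (R+r)²| ≤ 2μRd, with ξ* = arccos((d² + μ²R² − (R+r)²)/(2μRd)). Then for any aspect angle ξ ∈ [0, π], d ≤ ρ(ξ) if and only if ξ ≤ ξ*. Hence the unsafe set of aspect angles {ξ ∈ [−π, π] : d ≤ ρ(|ξ|)} equals [−ξ*, ξ*]. -/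
/-!
With `a = μR` and `K = R + r`, the radius `ρ(ξ)` is the larger root in `t` of
`t² - 2 a t cos ξ + a² - K² = 0` (the law of cosines in the triangle with sides `t`, `a`, `K`), and the
smaller root is `≤ 0` because `a ≤ K`. So `d ≤ ρ(ξ)` says exactly that `cos ξ` is at least the
law-of-cosines value `(d² + a² - K²) / (2ad)`, which on `[0, π]` means `ξ ≤ ξ*` since `cos` is decreasing there.
-/

open Real Set

lemma le_add_sqrt_sq_sub_iff {b c t : ℝ} (hc : c ≤ 0) (ht : 0 ≤ t) :
    t ≤ b + √(b ^ 2 - c) ↔ t ^ 2 - 2 * b * t + c ≤ 0 := by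
  constructor
  · intro h
    rcases le_or_gt t b with htb | htb
    · nlinarith
    · have := (le_sqrt' (sub_pos.2 htb)).1 (by linarith)
      nlinarith
  · intro h
    have := le_sqrt_of_sq_le (x := t - b) (y := b ^ 2 - c) (by nlinarith)
    linarith

lemma le_mul_add_sqrt_iff {a K d c : ℝ} (ha : 0 < a) (haK : a ^ 2 ≤ K ^ 2) (hd : 0 < d) :
    d ≤ a * (c + √(c ^ 2 - 1 + K ^ 2 / a ^ 2)) ↔ (d ^ 2 + a ^ 2 - K ^ 2) / (2 * a * d) ≤ c := by
  have hscale : a * √(c ^ 2 - 1 + K ^ 2 / a ^ 2) = √((a * c) ^ 2 - (a ^ 2 - K ^ 2)) := by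
    calc a * √(c ^ 2 - 1 + K ^ 2 / a ^ 2) = √(a ^ 2) * √(c ^ 2 - 1 + K ^ 2 / a ^ 2) := by
          rw [sqrt_sq ha.le]
      _ = √(a ^ 2 * (c ^ 2 - 1 + K ^ 2 / a ^ 2)) := (sqrt_mul (sq_nonneg a) _).symm
      _ = √((a * c) ^ 2 - (a ^ 2 - K ^ 2)) := by
          congr 1
          field_simp
          ring
  rw [mul_add, hscale, le_add_sqrt_sq_sub_iff (by linarith) hd.le, div_le_iff₀ (by positivity)]
  constructor <;> intro h <;> linarith

lemma Real.le_cos_iff_le_arccos {x ξ : ℝ} (hx : x ≤ 1) (hξ : ξ ∈ Icc 0 π) :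
    x ≤ cos ξ ↔ ξ ≤ arccos x := by
  rcases le_or_gt x (-1) with hx' | hx'
  · rw [arccos_of_le_neg_one hx']
    exact iff_of_true (hx'.trans (neg_one_le_cos ξ)) hξ.2
  · rw [← strictAntiOn_cos.le_iff_ge ⟨arccos_nonneg x, arccos_le_pi x⟩ hξ, cos_arccos hx'.le hx]

lemma setOf_mem_Icc_neg_and_abs_eq_Icc {P : ℝ → Prop} {θ L : ℝ} (hθ : θ ≤ L)
    (hP : ∀ x ∈ Icc 0 L, P x ↔ x ≤ θ) :
    {x | x ∈ Icc (-L) L ∧ P |x|} = Icc (-θ) θ := by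
  ext x
  have hmem : x ∈ Icc (-L) L ↔ |x| ∈ Icc 0 L := by
    rw [mem_Icc, mem_Icc, abs_le]
    exact (and_iff_right (abs_nonneg x)).symm
  change _ ∧ _ ↔ -θ ≤ x ∧ x ≤ θ
  rw [hmem, ← abs_le]
  constructor
  · rintro ⟨hxL, hPx⟩
    exact (hP _ hxL).1 hPx
  · intro hxθ
    have hxL : |x| ∈ Icc 0 L := ⟨abs_nonneg x, hxθ.trans hθ⟩
    exact ⟨hxL, (hP _ hxL).2 hxθ⟩

/-- With ξ* = arccos of the law-of-cosines argument, the agent at distance d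
is inside the BEZ at aspect angle ξ ∈ [0,π] iff ξ ≤ ξ*, and the unsafe set of aspect angles
in [−π, π] is exactly [−ξ*, ξ*]. -/
theorem unsafe_aspect_set_eq (μ R r d : ℝ)
    (hμ0 : 0 < μ) (hμ1 : μ < 1) (hR : 0 < R) (hr : 0 < r) (hd : 0 < d)
    (harg : |d ^ 2 + μ ^ 2 * R ^ 2 - (R + r) ^ 2| ≤ 2 * μ * R * d) :
    (∀ ξ ∈ Set.Icc (0 : ℝ) Real.pi,
      (d ≤ μ * R * (Real.cos ξ +
          Real.sqrt (Real.cos ξ ^ 2 - 1 + (R + r) ^ 2 / (μ ^ 2 * R ^ 2)))) ↔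
        ξ ≤ Real.arccos ((d ^ 2 + μ ^ 2 * R ^ 2 - (R + r) ^ 2) / (2 * μ * R * d))) ∧
    {ξ : ℝ | ξ ∈ Set.Icc (-Real.pi) Real.pi ∧
        d ≤ μ * R * (Real.cos |ξ| +
          Real.sqrt (Real.cos |ξ| ^ 2 - 1 + (R + r) ^ 2 / (μ ^ 2 * R ^ 2)))}
      = Set.Icc (-(Real.arccos ((d ^ 2 + μ ^ 2 * R ^ 2 - (R + r) ^ 2) / (2 * μ * R * d))))
          (Real.arccos ((d ^ 2 + μ ^ 2 * R ^ 2 - (R + r) ^ 2) / (2 * μ * R * d))) := by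
  have ha : 0 < μ * R := mul_pos hμ0 hR
  have haK : (μ * R) ^ 2 ≤ (R + r) ^ 2 :=
    pow_le_pow_left₀ ha.le (by nlinarith) 2
  have hA : (d ^ 2 + μ ^ 2 * R ^ 2 - (R + r) ^ 2) / (2 * μ * R * d) ≤ 1 := by
    rw [div_le_one (by positivity)]
    exact (le_abs_self _).trans harg
  have hunsafe : ∀ ξ ∈ Icc (0 : ℝ) π,
      d ≤ μ * R * (cos ξ + √(cos ξ ^ 2 - 1 + (R + r) ^ 2 / (μ ^ 2 * R ^ 2))) ↔
        ξ ≤ arccos ((d ^ 2 + μ ^ 2 * R ^ 2 - (R + r) ^ 2) / (2 * μ * R * d)) := by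
    intro ξ hξ
    have := le_mul_add_sqrt_iff (c := cos ξ) ha haK hd
    rw [mul_pow, ← mul_assoc 2 μ R] at this
    rw [this, le_cos_iff_le_arccos hA hξ]
  exact ⟨hunsafe, setOf_mem_Icc_neg_and_abs_eq_Icc (arccos_le_pi _) hunsafe⟩
end
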